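/- arXiv:2311.03471 — 5 statements merged into one kernel-verified Lean document; each statement's English description precedes it below -/
import Mathlib

section
/- Let c_1, …, c_N be vectors in ℝ^d, let 1 ≤ n ≤ N, and let φ : ℝ^d → ℝ be a convex function. Then the uniform average of φ(∑_{j=1}^n c_{σ(j)}) over all injective maps σ : {1,…,n} → {1,…,N} (sampling without replacement) is at most the uniform average of φ(∑_{j=1}^n c_{f(j)}) over all maps f : {1,…,n} → {1,…,N} (sampling with replacement); that is, (1/(N(N−1)⋯(N−n+1))) ∑_{σ injective} φ(∑_{j=1}^n c_{σ(j)}) ≤ (1/N^n) ∑_{f : {1,…,n}→{1,…,N}} φ(∑_{j=1}^n c_{f(j)}). -/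
open Finset Function


lemma exists_perm_comp {α γ : Type*} [Fintype γ] [DecidableEq γ] (g g' : α ↪ γ) :
    ∃ π : Equiv.Perm γ, ∀ a, π (g a) = g' a := by
  classical
  let e : {x // x ∈ Set.range g} ≃ {x // x ∈ Set.range g'} :=
    (Equiv.ofInjective g g.injective).symm.trans (Equiv.ofInjective g' g'.injective)
  refine ⟨Equiv.extendSubtype e, fun a => ?_⟩
  rw [Equiv.extendSubtype_apply_of_mem e (g a) ⟨a, rfl⟩]
  show ((Equiv.ofInjective g' g'.injective) ((Equiv.ofInjective g g.injective).symm ⟨g a, _⟩) : γ) = g' a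
  have : (Equiv.ofInjective g g.injective).symm ⟨g a, ⟨a, rfl⟩⟩ = a :=
    (Equiv.ofInjective g g.injective).symm_apply_apply a
  rw [this]
  simp [Equiv.ofInjective]

-- fibers of σ ↦ e.trans σ have constant cardinality
lemma fiber_card_const {α β γ : Type*} [Fintype α] [Fintype β] [Fintype γ]
    [DecidableEq α] [DecidableEq β] [DecidableEq γ]
    (e : α ↪ β) (g g' : α ↪ γ) :
    (univ.filter fun σ : β ↪ γ => e.trans σ = g).card
      = (univ.filter fun σ : β ↪ γ => e.trans σ = g').card := by
  obtain ⟨π, hπ⟩ := exists_perm_comp g g'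
  apply Finset.card_bij (fun σ _ => σ.trans π.toEmbedding)
  · intro σ hσ
    simp only [mem_filter, mem_univ, true_and] at hσ ⊢
    ext a
    have : σ (e a) = g a := by rw [← hσ]; rfl
    show π (σ (e a)) = g' a
    rw [this, hπ]
  · intro σ hσ τ hτ h
    ext b
    have := congrArg (fun (ρ : β ↪ γ) => (ρ b : γ)) h
    simpa using π.injective (by simpa using this)
  · intro τ hτ
    simp only [mem_filter, mem_univ, true_and] at hτ
    refine ⟨τ.trans π.symm.toEmbedding, ?_, ?_⟩
    · simp only [mem_filter, mem_univ, true_and]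
      ext a
      have : (π.symm) (τ (e a)) = π.symm (g' a) := by rw [← hτ]; rfl
      simpa [hπ] using this.trans (by rw [← hπ a]; simp)
    · ext b; simp

-- L1
lemma sum_trans_embedding {α β γ : Type*} [Fintype α] [Fintype β] [Fintype γ]
    [DecidableEq α] [DecidableEq β] [DecidableEq γ]
    {M : Type*} [AddCommMonoid M] (e : α ↪ β) (F : (α ↪ γ) → M) (g₀ : α ↪ γ) :
    ∑ σ : β ↪ γ, F (e.trans σ)
      = (univ.filter fun σ : β ↪ γ => e.trans σ = g₀).card • ∑ g : α ↪ γ, F g := by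
  classical
  rw [← Finset.sum_fiberwise univ (fun σ : β ↪ γ => e.trans σ) (fun σ => F (e.trans σ)),
    Finset.smul_sum]
  refine Finset.sum_congr rfl fun g _ => ?_
  rw [Finset.sum_congr rfl (fun σ hσ => ?_), Finset.sum_const,
    fiber_card_const e g g₀]
  · simp only [mem_filter, mem_univ, true_and] at hσ
    rw [hσ]

lemma key {V : Type*} [AddCommGroup V] [Module ℝ V] {N n : ℕ} (hn : 1 ≤ n) (hnN : n ≤ N)
    (c : Fin N → V) (φ : V → ℝ) (hφ : ConvexOn ℝ Set.univ φ)
    {ι : Type*} [Fintype ι] [DecidableEq ι] (hk : Fintype.card ι ≤ n)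
    (m : ι → ℕ) (hm : ∑ i, m i = n) :
    (Fintype.card (ι ↪ Fin N) : ℝ) * ∑ σ : Fin n ↪ Fin N, φ (∑ j, c (σ j)) ≤
      (Fintype.card (Fin n ↪ Fin N) : ℝ) * ∑ g : ι ↪ Fin N, φ (∑ i, (m i : ℝ) • c (g i)) := by
  classical
  set Eh : ℕ := Fintype.card (ι ↪ Fin n) with hEh
  set Eg : ℕ := Fintype.card (ι ↪ Fin N) with hEg
  set Es : ℕ := Fintype.card (Fin n ↪ Fin N) with hEs
  have hkn : Fintype.card ι ≤ Fintype.card (Fin n) := by simpa using hk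
  have hkN : Fintype.card ι ≤ Fintype.card (Fin N) := by simpa using hk.trans hnN
  have hEh_pos : 0 < Eh := Fintype.card_pos_iff.mpr (Function.Embedding.nonempty_of_card_le hkn)
  have hEg_pos : 0 < Eg := Fintype.card_pos_iff.mpr (Function.Embedding.nonempty_of_card_le hkN)
  have hEhR : (0:ℝ) < (Eh:ℝ) := by exact_mod_cast hEh_pos
  have hEgR : (0:ℝ) < (Eg:ℝ) := by exact_mod_cast hEg_pos
  have hn' : (0:ℝ) < (n:ℝ) := by exact_mod_cast hn
  set Z : (ι ↪ Fin N) → V := fun g => ∑ i, (m i : ℝ) • c (g i) with hZ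
  -- Step A: identity per σ
  have stepA : ∀ σ : Fin n ↪ Fin N,
      ∑ h : ι ↪ Fin n, Z (h.trans σ) = (Eh : ℝ) • ∑ j, c (σ j) := by
    intro σ
    have swap : ∑ h : ι ↪ Fin n, Z (h.trans σ)
        = ∑ i, (m i : ℝ) • ∑ h : ι ↪ Fin n, c (σ (h i)) := by
      rw [Finset.sum_comm]
      exact Finset.sum_congr rfl fun i _ => by rw [Finset.smul_sum]; rfl
    rw [swap]
    let g₀ : Unit ↪ Fin n := ⟨fun _ => ⟨0, hn⟩, fun _ _ _ => Subsingleton.elim _ _⟩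
    have inner : ∀ i : ι, ∑ h : ι ↪ Fin n, c (σ (h i))
        = ((Eh : ℝ) / n) • ∑ x, c (σ x) := by
      intro i
      let ei : Unit ↪ ι := ⟨fun _ => i, fun _ _ _ => Subsingleton.elim _ _⟩
      have h1 := sum_trans_embedding (γ := Fin n) ei (fun u => c (σ (u ()))) g₀
      have h2 := sum_trans_embedding (γ := Fin n) ei (fun _ => (1:ℕ)) g₀
      set C : ℕ := (univ.filter fun h : ι ↪ Fin n => ei.trans h = g₀).card with hC
      have hcard1 : Fintype.card (Unit ↪ Fin n) = n := by
        rw [Fintype.card_embedding_eq]; simp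
      simp only [Finset.sum_const, Finset.card_univ, smul_eq_mul, mul_one, hcard1] at h2
      have hCn : Eh = C * n := h2
      have reidx : ∑ u : Unit ↪ Fin n, c (σ (u ())) = ∑ x, c (σ x) :=
        Fintype.sum_equiv Equiv.uniqueEmbeddingEquivResult _ _ (fun u => rfl)
      have key1 : ∑ h : ι ↪ Fin n, c (σ (h i)) = C • ∑ x, c (σ x) := by
        rw [← reidx, ← h1]; rfl
      rw [key1, ← Nat.cast_smul_eq_nsmul ℝ]
      congr 1
      rw [hCn]
      push_cast
      field_simp
    rw [Finset.sum_congr rfl (fun i _ => by rw [inner i, smul_smul]),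
      ← Finset.sum_smul, ← Finset.sum_mul]
    have hmr : (∑ i : ι, (m i : ℝ)) = (n : ℝ) := by exact_mod_cast hm
    rw [hmr]
    congr 1
    field_simp
  -- Step B: Jensen per σ
  have stepB : ∀ σ : Fin n ↪ Fin N,
      (Eh : ℝ) * φ (∑ j, c (σ j)) ≤ ∑ h : ι ↪ Fin n, φ (Z (h.trans σ)) := by
    intro σ
    have hw : ∑ _h : ι ↪ Fin n, ((Eh:ℝ)⁻¹) = 1 := by
      rw [Finset.sum_const, Finset.card_univ, nsmul_eq_mul]
      exact mul_inv_cancel₀ hEhR.ne'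
    have hj := hφ.map_sum_le (t := (univ : Finset (ι ↪ Fin n)))
      (w := fun _ => (Eh:ℝ)⁻¹) (p := fun h => Z (h.trans σ))
      (fun _ _ => by positivity) hw (fun _ _ => Set.mem_univ _)
    have harg : ∑ h : ι ↪ Fin n, (Eh:ℝ)⁻¹ • Z (h.trans σ) = ∑ j, c (σ j) := by
      rw [← Finset.smul_sum, stepA σ, smul_smul, inv_mul_cancel₀ hEhR.ne', one_smul]
    rw [harg] at hj
    calc (Eh : ℝ) * φ (∑ j, c (σ j))
        ≤ (Eh:ℝ) * ∑ h : ι ↪ Fin n, (Eh:ℝ)⁻¹ * φ (Z (h.trans σ)) :=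
          mul_le_mul_of_nonneg_left hj hEhR.le
      _ = ∑ h : ι ↪ Fin n, φ (Z (h.trans σ)) := by
          rw [← Finset.mul_sum, ← mul_assoc, mul_inv_cancel₀ hEhR.ne', one_mul]
  -- Step C
  obtain ⟨g₀⟩ : Nonempty (ι ↪ Fin N) := Function.Embedding.nonempty_of_card_le hkN
  set W : ℝ := ∑ g : ι ↪ Fin N, φ (Z g) with hW
  have stepC : ∀ h : ι ↪ Fin n,
      ∑ σ : Fin n ↪ Fin N, φ (Z (h.trans σ)) = ((Es : ℝ) / Eg) * W := by
    intro h
    have h1 := sum_trans_embedding (γ := Fin N) h (fun g => φ (Z g)) g₀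
    have h2 := sum_trans_embedding (γ := Fin N) h (fun _ => (1:ℕ)) g₀
    set D : ℕ := (univ.filter fun σ : Fin n ↪ Fin N => h.trans σ = g₀).card with hDdef
    simp only [Finset.sum_const, Finset.card_univ, smul_eq_mul, mul_one] at h2
    have hD : Es = D * Eg := h2
    rw [h1, nsmul_eq_mul]
    congr 1
    rw [eq_div_iff hEgR.ne']
    exact_mod_cast hD.symm
  -- assemble
  set A : ℝ := ∑ σ : Fin n ↪ Fin N, φ (∑ j, c (σ j)) with hA
  have h₁ : (Eh:ℝ) * A ≤ ∑ σ : Fin n ↪ Fin N, ∑ h : ι ↪ Fin n, φ (Z (h.trans σ)) := by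
    rw [hA, Finset.mul_sum]
    exact Finset.sum_le_sum fun σ _ => stepB σ
  have h₂ : ∑ σ : Fin n ↪ Fin N, ∑ h : ι ↪ Fin n, φ (Z (h.trans σ))
      = (Eh:ℝ) * (((Es:ℝ)/Eg) * W) := by
    rw [Finset.sum_comm, Finset.sum_congr rfl (fun h _ => stepC h), Finset.sum_const,
      Finset.card_univ, nsmul_eq_mul]
  have hAW : A ≤ ((Es:ℝ)/Eg) * W := le_of_mul_le_mul_left (h₁.trans_eq h₂) hEhR
  have := mul_le_mul_of_nonneg_left hAW hEgR.le
  calc (Eg:ℝ) * A ≤ (Eg:ℝ) * (((Es:ℝ)/Eg) * W) := this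
    _ = (Es:ℝ) * W := by field_simp

variable {n N : ℕ}

/-- canonical representative: least index with the same value -/
def rk (f : Fin n → Fin N) : Fin n → Fin n :=
  fun j => (univ.filter fun i => f i = f j).min' ⟨j, by simp⟩

lemma rk_apply (f : Fin n → Fin N) (j : Fin n) : f (rk f j) = f j := by
  have := Finset.min'_mem (univ.filter fun i => f i = f j) ⟨j, by simp⟩
  simpa [rk] using this

lemma rk_le (f : Fin n → Fin N) (j : Fin n) : rk f j ≤ j :=
  Finset.min'_le _ j (by simp)

lemma rk_eq_of {f : Fin n → Fin N} {i j : Fin n} (h : f i = f j) : rk f i = rk f j := by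
  unfold rk
  congr 1
  ext x
  simp [h]

lemma rk_idem (f : Fin n → Fin N) (j : Fin n) : rk f (rk f j) = rk f j :=
  rk_eq_of (rk_apply f j)

/-- valid kernels -/
def K (n : ℕ) : Finset (Fin n → Fin n) :=
  univ.filter fun r => ∀ j, r (r j) = r j ∧ r j ≤ j

lemma rk_mem_K (f : Fin n → Fin N) : rk f ∈ K n := by
  simp only [K, mem_filter, mem_univ, true_and]
  exact fun j => ⟨rk_idem f j, rk_le f j⟩

/-- reconstruction of a function from its kernel and an embedding of fixed points -/
def recon (hN : 0 < N) (r : Fin n → Fin n) (g : {j : Fin n // r j = j} ↪ Fin N) :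
    Fin n → Fin N :=
  fun j => if h : r (r j) = r j then g ⟨r j, h⟩ else ⟨0, hN⟩

lemma rk_recon (hN : 0 < N) {r : Fin n → Fin n} (hr : ∀ j, r (r j) = r j ∧ r j ≤ j)
    (g : {j : Fin n // r j = j} ↪ Fin N) : rk (recon hN r g) = r := by
  funext j
  have hval : ∀ i, recon hN r g i = g ⟨r i, (hr i).1⟩ := fun i => dif_pos (hr i).1
  have hset : (univ.filter fun i => recon hN r g i = recon hN r g j)
      = (univ.filter fun i => r i = r j) := by
    ext i
    simp only [mem_filter, mem_univ, true_and, hval]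
    constructor
    · intro h
      exact congrArg Subtype.val (g.injective h)
    · intro h
      congr 1
      exact Subtype.ext h
  show (univ.filter fun i => recon hN r g i = recon hN r g j).min' _ = r j
  have : ∀ (hne), ((univ.filter fun i => r i = r j).min' hne) = r j := by
    intro hne
    apply le_antisymm
    · exact Finset.min'_le _ _ (by simp [(hr j).1])
    · apply Finset.le_min'
      intro y hy
      simp only [mem_filter, mem_univ, true_and] at hy
      calc r j = r y := hy.symm
        _ ≤ y := (hr y).2
  rw [le_antisymm_iff]
  constructor
  · have := Finset.min'_le (univ.filter fun i => recon hN r g i = recon hN r g j) (r j)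
      (by rw [hset]; simp [(hr j).1])
    exact this
  · apply Finset.le_min'
    intro y hy
    rw [hset] at hy
    simp only [mem_filter, mem_univ, true_and] at hy
    calc r j = r y := hy.symm
      _ ≤ y := (hr y).2

lemma recon_eq (hN : 0 < N) (r : Fin n → Fin n) (g : {j : Fin n // r j = j} ↪ Fin N)
    (j : Fin n) (h : r (r j) = r j) : recon hN r g j = g ⟨r j, h⟩ := dif_pos h

/-- the grouping identity -/
lemma G1 (hN : 0 < N) {M : Type*} [AddCommMonoid M] (F : (Fin n → Fin N) → M) :
    ∑ f : Fin n → Fin N, F f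
      = ∑ r ∈ K n, ∑ g : {j : Fin n // r j = j} ↪ Fin N, F (recon hN r g) := by
  classical
  rw [← Finset.sum_fiberwise univ (rk (N := N)) F]
  rw [← Finset.sum_subset (Finset.subset_univ (K n)) (fun r _ hr => ?_)]
  · refine Finset.sum_congr rfl fun r hr => ?_
    simp only [K, mem_filter, mem_univ, true_and] at hr
    refine Finset.sum_bij (fun f hf => (⟨fun v => f v.1, ?_⟩ : {j : Fin n // r j = j} ↪ Fin N))
      ?_ ?_ ?_ ?_
    · intro v w h
      simp only [mem_filter, mem_univ, true_and] at hf
      have : rk f v.1 = rk f w.1 := rk_eq_of h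
      rw [hf] at this
      exact Subtype.ext (by rw [← v.2, ← w.2]; exact this)
    · intro f hf; exact mem_univ _
    · intro f hf f' hf' h
      simp only [mem_filter, mem_univ, true_and] at hf hf'
      funext j
      have h1 : f (r j) = f j := by rw [← hf]; exact rk_apply f j
      have h2 : f' (r j) = f' j := by rw [← hf']; exact rk_apply f' j
      have := congrArg (fun (e : {j : Fin n // r j = j} ↪ Fin N) => e ⟨r j, (hr j).1⟩) h
      rw [← h1, ← h2]
      exact this
    · intro g _
      refine ⟨recon hN r g, ?_, ?_⟩
      · simp only [mem_filter, mem_univ, true_and]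
        exact rk_recon hN hr g
      · have hkey : ∀ v : {j : Fin n // r j = j}, recon hN r g v.1 = g v := by
          intro v
          rw [recon, dif_pos]
          · congr 1
            exact Subtype.ext v.2
          · rw [v.2, v.2]
        ext v
        exact congrArg Fin.val (hkey v)
    · intro f hf
      simp only [mem_filter, mem_univ, true_and] at hf
      congr 1
      funext j
      show f j = recon hN r _ j
      rw [recon, dif_pos (hr j).1]
      show f j = f (r j)
      rw [← hf]
      exact (rk_apply f j).symm
  · exact Finset.sum_eq_zero fun f hf => by
      simp only [mem_filter, mem_univ, true_and] at hf
      exact absurd (hf ▸ rk_mem_K f) hr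

lemma recon_sum (hN : 0 < N) {V : Type*} [AddCommGroup V] [Module ℝ V] (c : Fin N → V)
    {r : Fin n → Fin n} (hr : ∀ j, r (r j) = r j ∧ r j ≤ j)
    (g : {j : Fin n // r j = j} ↪ Fin N) :
    ∑ j : Fin n, c (recon hN r g j)
      = ∑ v : {j : Fin n // r j = j},
          (((univ.filter fun j => r j = v.1).card : ℝ)) • c (g v) := by
  classical
  rw [← Finset.sum_fiberwise univ (fun j : Fin n => (⟨r j, (hr j).1⟩ : {j : Fin n // r j = j}))
        (fun j => c (recon hN r g j))]
  refine Finset.sum_congr rfl fun v _ => ?_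
  have hfe : (univ.filter fun j : Fin n => (⟨r j, (hr j).1⟩ : {j : Fin n // r j = j}) = v)
      = (univ.filter fun j : Fin n => r j = v.1) := by
    ext j; simp [Subtype.ext_iff]
  have hval : ∀ j ∈ univ.filter (fun j : Fin n => (⟨r j, (hr j).1⟩ : {j : Fin n // r j = j}) = v),
      c (recon hN r g j) = c (g v) := by
    intro j hj
    simp only [mem_filter, mem_univ, true_and] at hj
    rw [recon_eq hN r g j (hr j).1]
    exact congrArg c (congrArg g hj)
  rw [Finset.sum_congr rfl hval, Finset.sum_const, hfe, ← Nat.cast_smul_eq_nsmul ℝ]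

lemma weight_sum {r : Fin n → Fin n} (hr : ∀ j, r (r j) = r j ∧ r j ≤ j) :
    ∑ v : {j : Fin n // r j = j}, (univ.filter fun j : Fin n => r j = v.1).card = n := by
  classical
  have h := Finset.card_eq_sum_card_fiberwise (s := (univ : Finset (Fin n)))
    (t := (univ : Finset {j : Fin n // r j = j}))
    (f := fun j : Fin n => (⟨r j, (hr j).1⟩ : {j : Fin n // r j = j})) (fun _ _ => mem_univ _)
  rw [card_univ, Fintype.card_fin] at h
  rw [show (∑ v : {j : Fin n // r j = j}, (univ.filter fun j : Fin n => r j = v.1).card)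
      = ∑ v : {j : Fin n // r j = j},
          (univ.filter fun j : Fin n => (⟨r j, (hr j).1⟩ : {j : Fin n // r j = j}) = v).card from
    Finset.sum_congr rfl fun v _ => by congr 1; ext j; simp [Subtype.ext_iff]]
  exact h.symm


/-- Hoeffding's inequality: for convex `φ`, the average of `φ` of the sum of `n` draws
without replacement from `c 1, …, c N` is at most the average over draws with replacement. -/
theorem stmt_0 (d N n : ℕ) (hn : 1 ≤ n) (hnN : n ≤ N)
    (c : Fin N → (Fin d → ℝ)) (φ : (Fin d → ℝ) → ℝ)
    (hφ : ConvexOn ℝ Set.univ φ) :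
    (1 / ∏ j ∈ Finset.range n, ((N : ℝ) - j)) *
        ∑ σ : Fin n ↪ Fin N, φ (∑ j : Fin n, c (σ j)) ≤
      (1 / (N : ℝ) ^ n) * ∑ f : Fin n → Fin N, φ (∑ j : Fin n, c (f j)) := by
  classical
  have hN : 0 < N := lt_of_lt_of_le hn hnN
  set A : ℝ := ∑ σ : Fin n ↪ Fin N, φ (∑ j : Fin n, c (σ j)) with hA
  set B : ℝ := ∑ f : Fin n → Fin N, φ (∑ j : Fin n, c (f j)) with hB
  set Es : ℕ := Fintype.card (Fin n ↪ Fin N) with hEs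
  have hnN' : Fintype.card (Fin n) ≤ Fintype.card (Fin N) := by simpa using hnN
  have hEs_pos : 0 < Es :=
    Fintype.card_pos_iff.mpr (Function.Embedding.nonempty_of_card_le hnN')
  have hEsR : (0:ℝ) < (Es:ℝ) := by exact_mod_cast hEs_pos
  -- per-kernel inequality
  have hr_ineq : ∀ r ∈ K n,
      ((Fintype.card ({j : Fin n // r j = j} ↪ Fin N) : ℝ)) * A
        ≤ (Es:ℝ) * ∑ g : {j : Fin n // r j = j} ↪ Fin N, φ (∑ j : Fin n, c (recon hN r g j)) := by
    intro r hrK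
    simp only [K, mem_filter, mem_univ, true_and] at hrK
    have hk : Fintype.card {j : Fin n // r j = j} ≤ n := by
      have := Fintype.card_subtype_le (fun j : Fin n => r j = j)
      simpa using this
    have hkey := key hn hnN c φ hφ hk
      (fun v : {j : Fin n // r j = j} => (univ.filter fun j : Fin n => r j = v.1).card)
      (weight_sum hrK)
    refine hkey.trans_eq ?_
    congr 1
    refine Finset.sum_congr rfl fun g _ => ?_
    rw [recon_sum hN c hrK g]
  -- decomposition of B
  have hBdec : B = ∑ r ∈ K n,
      ∑ g : {j : Fin n // r j = j} ↪ Fin N, φ (∑ j : Fin n, c (recon hN r g j)) :=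
    G1 hN (fun f => φ (∑ j : Fin n, c (f j)))
  -- counting
  have hcount : ∑ r ∈ K n, Fintype.card ({j : Fin n // r j = j} ↪ Fin N) = N ^ n := by
    have := G1 (n := n) hN (fun _ => (1:ℕ))
    simp only [Finset.sum_const, Finset.card_univ, smul_eq_mul, mul_one] at this
    rw [← this]
    simp [Fintype.card_fun]
  -- sum up
  have main : ((N:ℝ))^n * A ≤ (Es:ℝ) * B := by
    have h1 : ∑ r ∈ K n, ((Fintype.card ({j : Fin n // r j = j} ↪ Fin N) : ℝ)) * A
        ≤ ∑ r ∈ K n, (Es:ℝ) *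
            ∑ g : {j : Fin n // r j = j} ↪ Fin N, φ (∑ j : Fin n, c (recon hN r g j)) :=
      Finset.sum_le_sum hr_ineq
    have h2 : ∑ r ∈ K n, ((Fintype.card ({j : Fin n // r j = j} ↪ Fin N) : ℝ)) * A
        = ((N:ℝ))^n * A := by
      rw [← Finset.sum_mul]
      congr 1
      rw [← Nat.cast_sum]
      rw [hcount]
      push_cast
      ring
    have h3 : ∑ r ∈ K n, (Es:ℝ) *
        ∑ g : {j : Fin n // r j = j} ↪ Fin N, φ (∑ j : Fin n, c (recon hN r g j))
        = (Es:ℝ) * B := by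
      rw [← Finset.mul_sum, ← hBdec]
    rw [← h2, ← h3]
    exact h1
  -- identify the falling factorial product
  have hPn : ∏ j ∈ Finset.range n, ((N : ℝ) - j) = (Es:ℝ) := by
    rw [hEs, Fintype.card_embedding_eq, Fintype.card_fin, Fintype.card_fin,
      Nat.descFactorial_eq_prod_range, Nat.cast_prod]
    refine Finset.prod_congr rfl fun i hi => ?_
    rw [Nat.cast_sub (le_of_lt (lt_of_lt_of_le (mem_range.mp hi) hnN))]
  have hNn : (0:ℝ) < ((N:ℝ))^n := by positivity
  rw [hPn, div_mul_eq_mul_div, one_mul, div_mul_eq_mul_div, one_mul,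
    div_le_div_iff₀ hEsR hNn]
  nlinarith [main]
end

section
/- Let X be a real T×k₁ matrix, Z a real T×k₂ matrix, and Y ∈ ℝ^T. Let U = [X Z] denote the T×(k₁+k₂) matrix obtained by horizontally concatenating the columns of X and Z, and let M = I_T − Z(ZᵀZ)⁻¹Zᵀ. If UᵀU, ZᵀZ and XᵀMX are all invertible, then the first k₁ coordinates of the joint least-squares coefficient vector δ̂ = (UᵀU)⁻¹UᵀY coincide with the vector γ̂ = (XᵀMX)⁻¹XᵀMY. -/
/-! The least-squares residual `r = Y - U δ̂` is orthogonal to the columns of both `X` and `Z`.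
Writing `Y = X γ + Z β + r` with `(γ, β) = δ̂`, the residual maker `M` kills `Z` and fixes `r`
(as `Zᵀ r = 0`), so `Xᵀ M Y = Xᵀ M X γ + Xᵀ r = Xᵀ M X γ`: `γ` solves the normal equation of the
regression of `M Y` on `M X`. -/

open Matrix

namespace Matrix

theorem fromCols_transpose_mulVec_eq_zero_iff {R m n p : Type*} [Semiring R] [Fintype m]
    (X : Matrix m p R) (Z : Matrix m n R) (v : m → R) :
    (fromCols X Z)ᵀ *ᵥ v = 0 ↔ Xᵀ *ᵥ v = 0 ∧ Zᵀ *ᵥ v = 0 := by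
  rw [transpose_fromCols, fromRows_mulVec, ← Sum.elim_zero_zero, Sum.elim_eq_iff]

variable {R : Type*} [CommRing R] {m n : Type*} [Fintype m] [Fintype n] [DecidableEq n]

noncomputable def leastSquaresCoeff (U : Matrix m n R) (Y : m → R) : n → R :=
  ((Uᵀ * U)⁻¹ * Uᵀ) *ᵥ Y

theorem transpose_mulVec_sub_mulVec_leastSquaresCoeff {U : Matrix m n R}
    (hU : IsUnit (Uᵀ * U).det) (Y : m → R) :
    Uᵀ *ᵥ (Y - U *ᵥ leastSquaresCoeff U Y) = 0 := by
  rw [leastSquaresCoeff, mulVec_sub, mulVec_mulVec, mulVec_mulVec, ← Matrix.mul_assoc,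
    mul_nonsing_inv _ hU, Matrix.one_mul, sub_self]

variable [DecidableEq m]

noncomputable def residualMaker (Z : Matrix m n R) : Matrix m m R := 1 - Z * (Zᵀ * Z)⁻¹ * Zᵀ

theorem residualMaker_mul_self {Z : Matrix m n R} (hZ : IsUnit (Zᵀ * Z).det) :
    residualMaker Z * Z = 0 := by
  rw [residualMaker, Matrix.sub_mul, Matrix.one_mul, Matrix.mul_assoc _ Zᵀ,
    Matrix.mul_assoc, nonsing_inv_mul _ hZ, Matrix.mul_one, sub_self]

theorem residualMaker_mulVec_of_transpose_mulVec_eq_zero {Z : Matrix m n R} {r : m → R}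
    (hr : Zᵀ *ᵥ r = 0) : residualMaker Z *ᵥ r = r := by
  rw [residualMaker, sub_mulVec, one_mulVec, ← mulVec_mulVec, hr, mulVec_zero, sub_zero]

theorem transpose_mul_residualMaker_mulVec {p : Type*} [Fintype p] {X : Matrix m p R}
    {Z : Matrix m n R} (hZ : IsUnit (Zᵀ * Z).det) {Y r : m → R} {γ : p → R} {β : n → R}
    (hY : Y = X *ᵥ γ + Z *ᵥ β + r) (hXr : Xᵀ *ᵥ r = 0) (hZr : Zᵀ *ᵥ r = 0) :
    (Xᵀ * residualMaker Z) *ᵥ Y = (Xᵀ * residualMaker Z * X) *ᵥ γ := by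
  have hMY : residualMaker Z *ᵥ Y = residualMaker Z *ᵥ (X *ᵥ γ) + r := by
    rw [hY, mulVec_add, mulVec_add, mulVec_mulVec β, residualMaker_mul_self hZ, zero_mulVec,
      add_zero, residualMaker_mulVec_of_transpose_mulVec_eq_zero hZr]
  rw [← mulVec_mulVec, hMY, mulVec_add, hXr, add_zero, mulVec_mulVec, mulVec_mulVec]

end Matrix

/-- Frisch–Waugh–Lovell partitioned regression: the first block of the joint OLS
coefficient vector from regressing `Y` on `U = [X Z]` equals the residualized
estimator `(XᵀMX)⁻¹XᵀMY` where `M = I − Z(ZᵀZ)⁻¹Zᵀ`. -/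
theorem stmt_1 (T k₁ k₂ : ℕ)
    (X : Matrix (Fin T) (Fin k₁) ℝ) (Z : Matrix (Fin T) (Fin k₂) ℝ) (Y : Fin T → ℝ)
    (U : Matrix (Fin T) (Fin k₁ ⊕ Fin k₂) ℝ) (hUdef : U = Matrix.fromCols X Z)
    (M : Matrix (Fin T) (Fin T) ℝ) (hM : M = 1 - Z * (Zᵀ * Z)⁻¹ * Zᵀ)
    (hU : IsUnit (Uᵀ * U).det)
    (hZ : IsUnit (Zᵀ * Z).det)
    (hX : IsUnit (Xᵀ * M * X).det) :
    ∀ i : Fin k₁,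
      (((Uᵀ * U)⁻¹ * Uᵀ) *ᵥ Y) (Sum.inl i) = (((Xᵀ * M * X)⁻¹ * Xᵀ * M) *ᵥ Y) i := by
  intro i
  change leastSquaresCoeff U Y (Sum.inl i) = _
  set δ := leastSquaresCoeff U Y
  set r := Y - U *ᵥ δ
  obtain ⟨hXr, hZr⟩ : Xᵀ *ᵥ r = 0 ∧ Zᵀ *ᵥ r = 0 := by
    rw [← fromCols_transpose_mulVec_eq_zero_iff, ← hUdef]
    exact transpose_mulVec_sub_mulVec_leastSquaresCoeff hU Y
  have hY : Y = X *ᵥ (δ ∘ Sum.inl) + Z *ᵥ (δ ∘ Sum.inr) + r := by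
    rw [← fromCols_mulVec, ← hUdef, add_sub_cancel]
  have hnormal : (Xᵀ * M * X) *ᵥ (δ ∘ Sum.inl) = (Xᵀ * M) *ᵥ Y := by
    rw [hM]
    exact (transpose_mul_residualMaker_mulVec hZ hY hXr hZr).symm
  have := (Xᵀ * M * X).invertibleOfIsUnitDet hX
  rw [Matrix.mul_assoc, ← mulVec_mulVec, inv_mulVec_eq_vec hnormal.symm]
  rfl
end

section
/- Let X_1, …, X_N : Ω → ℝ^K be independent random vectors on a probability space such that for each i the second-moment matrix is the identity, i.e. E[X_{ij}X_{iℓ}] = δ_{jℓ} for all coordinates j, ℓ, and ‖X_i‖ ≤ ξ₀ almost surely for a constant ξ₀ > 0. Let Q̂ be the K×K random matrix with entries Q̂_{jℓ} = N⁻¹ ∑_{i=1}^N X_{ij}X_{iℓ}. Then E[‖Q̂ − I_K‖_F²] ≤ ξ₀² K / N, where ‖A‖_F² = ∑_{j,ℓ} A_{jℓ}² is the squared Frobenius norm. -/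
/-!
Each entry of `Q̂ - I` is the empirical mean `N⁻¹ ∑ᵢ Xᵢⱼ Xᵢₗ` minus its expectation, so its mean
square is a variance; by independence it equals `N⁻²` times the sum of the variances of the
`Xᵢⱼ Xᵢₗ`, each at most the second moment. Summed over the entries, these second moments give
`E‖Xᵢ‖⁴ ≤ ξ₀² E‖Xᵢ‖² = ξ₀² K`.
-/

open MeasureTheory ProbabilityTheory Finset

namespace EuclideanSpace

variable {ι : Type*} [Fintype ι]

lemma norm_apply_mul_apply_le (x : EuclideanSpace ℝ ι) (j ℓ : ι) : ‖x j * x ℓ‖ ≤ ‖x‖ ^ 2 := by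
  rw [norm_mul, sq]
  exact mul_le_mul (PiLp.norm_apply_le x j) (PiLp.norm_apply_le x ℓ) (norm_nonneg _)
    (norm_nonneg _)

lemma sum_sum_apply_mul_apply_sq (x : EuclideanSpace ℝ ι) :
    ∑ j, ∑ ℓ, (x j * x ℓ) ^ 2 = ‖x‖ ^ 4 := by
  rw [show ‖x‖ ^ 4 = (‖x‖ ^ 2) ^ 2 by ring, real_norm_sq_eq, sq (∑ i, _), sum_mul_sum]
  simp only [mul_pow]

end EuclideanSpace

section SecondMoments

variable {Ω ι : Type*} [Fintype ι] [MeasurableSpace Ω] {μ : Measure Ω}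
  {Z : Ω → EuclideanSpace ℝ ι} {C : ℝ}

lemma memLp_apply_mul_apply [IsFiniteMeasure μ] (hZ : AEMeasurable Z μ)
    (hbdd : ∀ᵐ ω ∂μ, ‖Z ω‖ ≤ C) (p : ENNReal) (j ℓ : ι) :
    MemLp (fun ω => Z ω j * Z ω ℓ) p μ := by
  refine MemLp.of_bound (by fun_prop) (C ^ 2) ?_
  filter_upwards [hbdd] with ω hω
  exact (EuclideanSpace.norm_apply_mul_apply_le _ j ℓ).trans
    (pow_le_pow_left₀ (norm_nonneg _) hω 2)

lemma integral_norm_sq_eq_card (hmom : ∀ j, ∫ ω, Z ω j * Z ω j ∂μ = 1) :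
    ∫ ω, ‖Z ω‖ ^ 2 ∂μ = Fintype.card ι := by
  have hint : ∀ j, Integrable (fun ω => Z ω j * Z ω j) μ := fun j =>
    .of_integral_ne_zero (by rw [hmom j]; exact one_ne_zero)
  simp_rw [EuclideanSpace.real_norm_sq_eq, sq]
  rw [integral_finsetSum _ fun j _ => hint j]
  simp [hmom]

lemma sum_sum_integral_apply_mul_apply_sq_le [IsFiniteMeasure μ] (hZ : AEMeasurable Z μ)
    (hbdd : ∀ᵐ ω ∂μ, ‖Z ω‖ ≤ C) :
    ∑ j, ∑ ℓ, ∫ ω, (Z ω j * Z ω ℓ) ^ 2 ∂μ ≤ C ^ 2 * ∫ ω, ‖Z ω‖ ^ 2 ∂μ := by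
  have hint : ∀ j ℓ, Integrable (fun ω => (Z ω j * Z ω ℓ) ^ 2) μ := fun j ℓ =>
    (memLp_apply_mul_apply hZ hbdd 2 j ℓ).integrable_sq
  have hnorm_sq : Integrable (fun ω => ‖Z ω‖ ^ 2) μ := by
    refine .of_bound (by fun_prop) (C ^ 2) ?_
    filter_upwards [hbdd] with ω hω
    rw [norm_pow, norm_norm]
    exact pow_le_pow_left₀ (norm_nonneg _) hω 2
  calc ∑ j, ∑ ℓ, ∫ ω, (Z ω j * Z ω ℓ) ^ 2 ∂μ = ∫ ω, ‖Z ω‖ ^ 4 ∂μ := by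
        simp_rw [← EuclideanSpace.sum_sum_apply_mul_apply_sq]
        rw [integral_finsetSum _ fun j _ => integrable_finsetSum _ fun ℓ _ => hint j ℓ]
        exact sum_congr rfl fun j _ => (integral_finsetSum _ fun ℓ _ => hint j ℓ).symm
    _ ≤ ∫ ω, C ^ 2 * ‖Z ω‖ ^ 2 ∂μ := by
        refine integral_mono_of_nonneg (.of_forall fun ω => by positivity)
          (hnorm_sq.const_mul _) ?_
        filter_upwards [hbdd] with ω hω
        rw [show ‖Z ω‖ ^ 4 = ‖Z ω‖ ^ 2 * ‖Z ω‖ ^ 2 by ring]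
        exact mul_le_mul_of_nonneg_right (pow_le_pow_left₀ (norm_nonneg _) hω 2) (by positivity)
    _ = C ^ 2 * ∫ ω, ‖Z ω‖ ^ 2 ∂μ := integral_const_mul _ _

end SecondMoments

section Variance

variable {Ω : Type*} [MeasurableSpace Ω] {μ : Measure Ω} [IsProbabilityMeasure μ]

lemma variance_const_mul_sum_le {n : Type*} [Fintype n] {P : n → Ω → ℝ}
    (hP : ∀ i, MemLp (P i) 2 μ) (hindep : Pairwise fun i i' => P i ⟂ᵢ[μ] P i') (c : ℝ) :
    Var[fun ω => c * ∑ i, P i ω; μ] ≤ c ^ 2 * ∑ i, ∫ ω, P i ω ^ 2 ∂μ := by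
  rw [variance_const_mul]
  refine mul_le_mul_of_nonneg_left ?_ (sq_nonneg c)
  have hsum : (fun ω => ∑ i, P i ω) = ∑ i, P i := by ext ω; simp
  rw [hsum, IndepFun.variance_sum (fun i _ => hP i) fun i _ i' _ h => hindep h]
  exact sum_le_sum fun i _ => variance_le_expectation_sq (hP i).aestronglyMeasurable

end Variance

section Empirical

variable {Ω ι n : Type*} [Fintype ι] [Fintype n] [MeasurableSpace Ω]
  {μ : Measure Ω} [IsProbabilityMeasure μ] {X : n → Ω → EuclideanSpace ℝ ι} {C : ℝ}

lemma integrable_sq_empirical_sub (hX : ∀ i, Measurable (X i))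
    (hbdd : ∀ i, ∀ᵐ ω ∂μ, ‖X i ω‖ ≤ C) (c d : ℝ) (j ℓ : ι) :
    Integrable (fun ω => (c * ∑ i, X i ω j * X i ω ℓ - d) ^ 2) μ :=
  (((memLp_finsetSum _ fun i _ =>
    memLp_apply_mul_apply (hX i).aemeasurable (hbdd i) 2 j ℓ).const_mul c).sub
    (memLp_const d)).integrable_sq

lemma integral_sq_empirical_sub_le [Nonempty n] (hX : ∀ i, Measurable (X i))
    (hindep : iIndepFun X μ) (hbdd : ∀ i, ∀ᵐ ω ∂μ, ‖X i ω‖ ≤ C) {j ℓ : ι} {m : ℝ}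
    (hmom : ∀ i, ∫ ω, X i ω j * X i ω ℓ ∂μ = m) :
    ∫ ω, ((Fintype.card n : ℝ)⁻¹ * ∑ i, X i ω j * X i ω ℓ - m) ^ 2 ∂μ
      ≤ ((Fintype.card n : ℝ)⁻¹) ^ 2 * ∑ i, ∫ ω, (X i ω j * X i ω ℓ) ^ 2 ∂μ := by
  set P : n → Ω → ℝ := fun i ω => X i ω j * X i ω ℓ
  have hP : ∀ i, MemLp (P i) 2 μ := fun i =>
    memLp_apply_mul_apply (hX i).aemeasurable (hbdd i) 2 j ℓ
  have hPindep : Pairwise fun i i' => P i ⟂ᵢ[μ] P i' := fun i i' hne =>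
    (hindep.indepFun hne).comp (φ := fun x : EuclideanSpace ℝ ι => x j * x ℓ)
      (ψ := fun x : EuclideanSpace ℝ ι => x j * x ℓ) (by fun_prop) (by fun_prop)
  have hmean : ∫ ω, (Fintype.card n : ℝ)⁻¹ * ∑ i, P i ω ∂μ = m := by
    rw [integral_const_mul, integral_finsetSum _ fun i _ => (hP i).integrable one_le_two]
    simp only [P, hmom, sum_const, card_univ, nsmul_eq_mul]
    field_simp
  calc _ = Var[fun ω => (Fintype.card n : ℝ)⁻¹ * ∑ i, P i ω; μ] := by
        rw [variance_eq_integral (by fun_prop), hmean]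
    _ ≤ _ := variance_const_mul_sum_le hP hPindep _

end Empirical

theorem stmt_3_general (K N : ℕ) (hN : 0 < N)
    {Ω : Type*} [MeasurableSpace Ω] (μ : Measure Ω) [IsProbabilityMeasure μ]
    (X : Fin N → Ω → EuclideanSpace ℝ (Fin K))
    (hmeas : ∀ i, Measurable (X i))
    (hindep : iIndepFun X μ)
    (hmom : ∀ i, ∀ j ℓ : Fin K,
      ∫ ω, X i ω j * X i ω ℓ ∂μ = if j = ℓ then (1 : ℝ) else 0)
    (ξ₀ : ℝ)
    (hbdd : ∀ i, ∀ᵐ ω ∂μ, ‖X i ω‖ ≤ ξ₀) :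
    ∫ ω, ∑ j : Fin K, ∑ ℓ : Fin K,
        ((N : ℝ)⁻¹ * ∑ i : Fin N, X i ω j * X i ω ℓ
          - if j = ℓ then (1 : ℝ) else 0) ^ 2 ∂μ
      ≤ ξ₀ ^ 2 * K / N := by
  have : Nonempty (Fin N) := Fin.pos_iff_nonempty.mp hN
  have hentry_int := fun j ℓ => integrable_sq_empirical_sub hmeas hbdd (N : ℝ)⁻¹
    (if j = ℓ then (1 : ℝ) else 0) j ℓ
  have hvec : ∀ i, ∑ j, ∑ ℓ, ∫ ω, (X i ω j * X i ω ℓ) ^ 2 ∂μ ≤ ξ₀ ^ 2 * K := fun i => by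
    simpa [integral_norm_sq_eq_card fun j => (hmom i j j).trans (if_pos rfl)] using
      sum_sum_integral_apply_mul_apply_sq_le (hmeas i).aemeasurable (hbdd i)
  calc _ = ∑ j, ∑ ℓ, ∫ ω, ((N : ℝ)⁻¹ * ∑ i, X i ω j * X i ω ℓ
          - if j = ℓ then (1 : ℝ) else 0) ^ 2 ∂μ := by
        rw [integral_finsetSum _ fun j _ => integrable_finsetSum _ fun ℓ _ => hentry_int j ℓ]
        exact sum_congr rfl fun j _ => integral_finsetSum _ fun ℓ _ => hentry_int j ℓ
    _ ≤ ∑ j : Fin K, ∑ ℓ : Fin K, ((N : ℝ)⁻¹) ^ 2 * ∑ i, ∫ ω, (X i ω j * X i ω ℓ) ^ 2 ∂μ := by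
        gcongr with j _ ℓ _
        simpa using integral_sq_empirical_sub_le hmeas hindep hbdd (hmom · j ℓ)
    _ = ((N : ℝ)⁻¹) ^ 2 * ∑ i, ∑ j, ∑ ℓ, ∫ ω, (X i ω j * X i ω ℓ) ^ 2 ∂μ := by
        simp_rw [← mul_sum]
        exact congrArg _ ((sum_congr rfl fun j _ => sum_comm).trans sum_comm)
    _ ≤ ((N : ℝ)⁻¹) ^ 2 * ∑ _i : Fin N, ξ₀ ^ 2 * K := by gcongr with i _; exact hvec i
    _ = ξ₀ ^ 2 * K / N := by
        simp only [sum_const, card_univ, Fintype.card_fin, nsmul_eq_mul]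
        field_simp

/-- Mean-square Frobenius bound for the empirical second-moment matrix of independent,
isotropic, a.s. norm-bounded random vectors: `E‖Q̂ − I_K‖_F² ≤ ξ₀²K/N`. -/
theorem stmt_3 (K N : ℕ) (hN : 0 < N)
    {Ω : Type*} [MeasurableSpace Ω] (μ : Measure Ω) [IsProbabilityMeasure μ]
    (X : Fin N → Ω → EuclideanSpace ℝ (Fin K))
    (hmeas : ∀ i, Measurable (X i))
    (hindep : iIndepFun X μ)
    (hmom : ∀ i, ∀ j ℓ : Fin K,
      ∫ ω, X i ω j * X i ω ℓ ∂μ = if j = ℓ then (1 : ℝ) else 0)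
    (ξ₀ : ℝ) (hξ₀ : 0 < ξ₀)
    (hbdd : ∀ i, ∀ᵐ ω ∂μ, ‖X i ω‖ ≤ ξ₀) :
    ∫ ω, ∑ j : Fin K, ∑ ℓ : Fin K,
        ((N : ℝ)⁻¹ * ∑ i : Fin N, X i ω j * X i ω ℓ
          - if j = ℓ then (1 : ℝ) else 0) ^ 2 ∂μ
      ≤ ξ₀ ^ 2 * K / N :=
  stmt_3_general K N hN μ X hmeas hindep hmom ξ₀ hbdd
end

section
/- Let ℓ ≥ 1 and ρ ∈ ℝ. Let u_t, u_{t−ℓ}, v_{t−1}, …, v_{t−ℓ}, and x_{t−ℓ−1}, …, x_{t−1} be square-integrable real random variables on a probability space such that x_{t−j} = ρ·x_{t−j−1} + v_{t−j} for j = 1, …, ℓ, and suppose that E[u_t v_{t−j}] = 0 for j = 1,…,ℓ, E[u_t x_{t−ℓ−1}] = 0, E[u_{t−ℓ} v_{t−j}] = 0 for j = 1,…,ℓ−1, E[u_{t−ℓ} v_{t−ℓ}] = σ_{uv}, and E[u_{t−ℓ} x_{t−ℓ−1}] = 0. Then E[(u_t − u_{t−ℓ})(x_{t−1} − x_{t−ℓ−1})]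 = −ρ^{ℓ−1} σ_{uv}; in particular this moment is nonzero whenever ρ^{ℓ−1} σ_{uv} ≠ 0. -/
/-!
Unrolling the AR(1) recursion gives `x_{t-1} = ρ^ℓ x_{t-ℓ-1} + ∑_{j<ℓ} ρ^j v_{t-j-1}`. Against `u_t`
every term of this expansion is uncorrelated, while against `u_{t-ℓ}` only the innovation `v_{t-ℓ}`
contributes, with weight `ρ^{ℓ-1}`. Expanding the product of the two differences bilinearly leaves
`-ρ^{ℓ-1} σ_{uv}`.
-/

open MeasureTheory Finset

theorem eq_pow_mul_add_sum_of_ar1 {R : Type*} [CommSemiring R] {ρ : R} {x v : ℕ → R} {k n : ℕ}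
    (hrec : ∀ j < n, x (k + j) = ρ * x (k + j + 1) + v (k + j)) :
    x k = ρ ^ n * x (k + n) + ∑ j ∈ range n, ρ ^ j * v (k + j) := by
  induction n with
  | zero => simp
  | succ n ih =>
    rw [ih fun j hj => hrec j (by omega), hrec n (by omega), sum_range_succ, ← add_assoc k n 1]
    ring

section Covariance

variable {Ω : Type*} [MeasurableSpace Ω] {μ : Measure Ω}

theorem integral_mul_eq_of_ar1 {ρ : ℝ} {f : Ω → ℝ} {x v : ℕ → Ω → ℝ} {k n : ℕ}
    (hf : MemLp f 2 μ) (hx : MemLp (x (k + n)) 2 μ) (hv : ∀ j < n, MemLp (v (k + j)) 2 μ)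
    (hrec : ∀ j < n, ∀ ω, x (k + j) ω = ρ * x (k + j + 1) ω + v (k + j) ω) :
    ∫ ω, f ω * x k ω ∂μ
      = ρ ^ n * ∫ ω, f ω * x (k + n) ω ∂μ + ∑ j ∈ range n, ρ ^ j * ∫ ω, f ω * v (k + j) ω ∂μ := by
  have hunroll : ∀ ω, f ω * x k ω
      = ρ ^ n * (f ω * x (k + n) ω) + ∑ j ∈ range n, ρ ^ j * (f ω * v (k + j) ω) := by
    intro ω
    rw [eq_pow_mul_add_sum_of_ar1 (x := fun j => x j ω) (v := fun j => v j ω)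
      fun j hj => hrec j hj ω, mul_add, mul_sum]
    simp only [mul_left_comm (f ω)]
  have hfx : Integrable (fun ω => f ω * x (k + n) ω) μ := hf.integrable_mul hx
  have hfv : ∀ j ∈ range n, Integrable (fun ω => ρ ^ j * (f ω * v (k + j) ω)) μ :=
    fun j hj => (hf.integrable_mul (hv j (mem_range.mp hj))).const_mul _
  simp_rw [hunroll]
  rw [integral_add (hfx.const_mul _) (integrable_finsetSum _ hfv),
    integral_finsetSum _ hfv, integral_const_mul]
  simp_rw [integral_const_mul]

theorem integral_sub_mul_sub {f g a b : Ω → ℝ} (hf : MemLp f 2 μ) (hg : MemLp g 2 μ)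
    (ha : MemLp a 2 μ) (hb : MemLp b 2 μ) :
    ∫ ω, (f ω - g ω) * (a ω - b ω) ∂μ
      = ∫ ω, f ω * a ω ∂μ - ∫ ω, f ω * b ω ∂μ - (∫ ω, g ω * a ω ∂μ - ∫ ω, g ω * b ω ∂μ) := by
  have hfa : Integrable (fun ω => f ω * a ω) μ := hf.integrable_mul ha
  have hfb : Integrable (fun ω => f ω * b ω) μ := hf.integrable_mul hb
  have hga : Integrable (fun ω => g ω * a ω) μ := hg.integrable_mul ha
  have hgb : Integrable (fun ω => g ω * b ω) μ := hg.integrable_mul hb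
  have hfab : Integrable (fun ω => f ω * a ω - f ω * b ω) μ := hfa.sub hfb
  have hgab : Integrable (fun ω => g ω * a ω - g ω * b ω) μ := hga.sub hgb
  simp_rw [sub_mul, mul_sub]
  rw [integral_sub hfab hgab, integral_sub hfa hfb, integral_sub hga hgb]

end Covariance

theorem stmt_8_general {Ω : Type*} [MeasurableSpace Ω] (μ : Measure Ω)
    (ℓ : ℕ) (hℓ : 1 ≤ ℓ) (ρ σuv : ℝ)
    (ut utl : Ω → ℝ) (v x : ℕ → Ω → ℝ)
    (hut : MemLp ut 2 μ) (hutl : MemLp utl 2 μ)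
    (hv : ∀ j, 1 ≤ j → j ≤ ℓ → MemLp (v j) 2 μ)
    (hx : ∀ j, 1 ≤ j → j ≤ ℓ + 1 → MemLp (x j) 2 μ)
    (hrec : ∀ j, 1 ≤ j → j ≤ ℓ → ∀ ω, x j ω = ρ * x (j + 1) ω + v j ω)
    (h1 : ∀ j, 1 ≤ j → j ≤ ℓ → ∫ ω, ut ω * v j ω ∂μ = 0)
    (h2 : ∫ ω, ut ω * x (ℓ + 1) ω ∂μ = 0)
    (h3 : ∀ j, 1 ≤ j → j ≤ ℓ - 1 → ∫ ω, utl ω * v j ω ∂μ = 0)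
    (h4 : ∫ ω, utl ω * v ℓ ω ∂μ = σuv)
    (h5 : ∫ ω, utl ω * x (ℓ + 1) ω ∂μ = 0) :
    ∫ ω, (ut ω - utl ω) * (x 1 ω - x (ℓ + 1) ω) ∂μ = -(ρ ^ (ℓ - 1) * σuv) ∧
      (ρ ^ (ℓ - 1) * σuv ≠ 0 →
        ∫ ω, (ut ω - utl ω) * (x 1 ω - x (ℓ + 1) ω) ∂μ ≠ 0) := by
  have hcov {f : Ω → ℝ} (hf : MemLp f 2 μ) := integral_mul_eq_of_ar1 (k := 1) (n := ℓ) hf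
    (add_comm 1 ℓ ▸ hx (ℓ + 1) (by omega) le_rfl) (fun j hj => hv _ (by omega) (by omega))
    (fun j hj => hrec _ (by omega) (by omega))
  have hut_x1 : ∫ ω, ut ω * x 1 ω ∂μ = 0 := by
    rw [hcov hut, add_comm 1 ℓ, h2, sum_eq_zero fun j hj => by
      rw [h1 _ (by omega) (by have := mem_range.mp hj; omega), mul_zero]]
    ring
  have hutl_x1 : ∫ ω, utl ω * x 1 ω ∂μ = ρ ^ (ℓ - 1) * σuv := by
    rw [hcov hutl, add_comm 1 ℓ, h5, mul_zero, zero_add,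
      sum_eq_single_of_mem (ℓ - 1) (mem_range.mpr (by omega)) fun j hj hne => by
        rw [h3 _ (by omega) (by have := mem_range.mp hj; omega), mul_zero],
      show 1 + (ℓ - 1) = ℓ by omega, h4]
  have hmoment : ∫ ω, (ut ω - utl ω) * (x 1 ω - x (ℓ + 1) ω) ∂μ = -(ρ ^ (ℓ - 1) * σuv) := by
    rw [integral_sub_mul_sub hut hutl (hx 1 le_rfl (by omega)) (hx (ℓ + 1) (by omega) le_rfl),
      hut_x1, h2, hutl_x1, h5]
    ring
  exact ⟨hmoment, fun h => hmoment ▸ neg_ne_zero.mpr h⟩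

/-- Failure of instrument validity for the differenced AR(1) predictive regression:
with `x_{t−j} = ρ x_{t−j−1} + v_{t−j}` (here `x j` stands for `x_{t−j}` and `v j` for
`v_{t−j}`), orthogonality conditions as stated, and `E[u_{t−ℓ} v_{t−ℓ}] = σ_{uv}`, one has
`E[(u_t − u_{t−ℓ})(x_{t−1} − x_{t−ℓ−1})] = −ρ^{ℓ−1} σ_{uv}`, which is nonzero whenever
`ρ^{ℓ−1} σ_{uv} ≠ 0`. -/
theorem stmt_8 {Ω : Type*} [MeasurableSpace Ω] (μ : Measure Ω) [IsProbabilityMeasure μ]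
    (ℓ : ℕ) (hℓ : 1 ≤ ℓ) (ρ σuv : ℝ)
    (ut utl : Ω → ℝ) (v x : ℕ → Ω → ℝ)
    (hut : MemLp ut 2 μ) (hutl : MemLp utl 2 μ)
    (hv : ∀ j, 1 ≤ j → j ≤ ℓ → MemLp (v j) 2 μ)
    (hx : ∀ j, 1 ≤ j → j ≤ ℓ + 1 → MemLp (x j) 2 μ)
    (hrec : ∀ j, 1 ≤ j → j ≤ ℓ → ∀ ω, x j ω = ρ * x (j + 1) ω + v j ω)
    (h1 : ∀ j, 1 ≤ j → j ≤ ℓ → ∫ ω, ut ω * v j ω ∂μ = 0)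
    (h2 : ∫ ω, ut ω * x (ℓ + 1) ω ∂μ = 0)
    (h3 : ∀ j, 1 ≤ j → j ≤ ℓ - 1 → ∫ ω, utl ω * v j ω ∂μ = 0)
    (h4 : ∫ ω, utl ω * v ℓ ω ∂μ = σuv)
    (h5 : ∫ ω, utl ω * x (ℓ + 1) ω ∂μ = 0) :
    ∫ ω, (ut ω - utl ω) * (x 1 ω - x (ℓ + 1) ω) ∂μ = -(ρ ^ (ℓ - 1) * σuv) ∧
      (ρ ^ (ℓ - 1) * σuv ≠ 0 →
        ∫ ω, (ut ω - utl ω) * (x 1 ω - x (ℓ + 1) ω) ∂μ ≠ 0) :=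
  stmt_8_general μ ℓ hℓ ρ σuv ut utl v x hut hutl hv hx hrec h1 h2 h3 h4 h5
end

section
/- Fix integers p, q ≥ 1 and a constant C > 0, and work in ℝ^p × ℝ^q with the Euclidean norm ‖(x₁,x₂)‖² = ‖x₁‖² + ‖x₂‖². For a unit vector u ∈ ℝ^q, define N_u = {(x₁, z·u) : x₁ ∈ ℝ^p, z ≥ 0, ‖x₁‖² + (C − z)² = C²}. Let ξ = (ξ₁, ξ₂) ∈ ℝ^p × ℝ^q with ξ₂ ≠ 0, and set ũ = −ξ₂/‖ξ₂‖. Then for every unit vector u ∈ ℝ^q, the Euclidean infimum distance from ξ to N_u is at most the infimum distance from ξ to N_ũ; that is, the maximum over unit vectors u of dist(ξ, N_u) is attained at ũ = −ξ₂/‖ξ₂‖. -/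
open Metric

/-- The bounding sphere `N_u = {(x₁, z·u) : z ≥ 0, ‖x₁‖² + (C − z)² = C²}` inside
`ℝ^p × ℝ^q` equipped with the Euclidean (L²) product norm. -/
def Nsphere (p q : ℕ) (C : ℝ) (u : EuclideanSpace ℝ (Fin q)) :
    Set (WithLp 2 (EuclideanSpace ℝ (Fin p) × EuclideanSpace ℝ (Fin q))) :=
  {w | ∃ (x₁ : EuclideanSpace ℝ (Fin p)) (z : ℝ), 0 ≤ z ∧
    ‖x₁‖ ^ 2 + (C - z) ^ 2 = C ^ 2 ∧
    w = (WithLp.equiv 2 (EuclideanSpace ℝ (Fin p) × EuclideanSpace ℝ (Fin q))).symm (x₁, z • u)}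

/-! Along the ray `z ↦ z • u` the triangle inequality gives `‖ξ₂ - z • u‖ ≤ ‖ξ₂‖ + z`, with
equality when `u = -ξ₂ / ‖ξ₂‖`. Matching the point
`(x₁, z • ũ)` of `N_ũ` with the point `(x₁, z • u)` of `N_u` therefore never increases the
distance to `ξ`, so every point of `N_ũ` is at least as far from `ξ` as some point of `N_u`. -/

theorem Metric.infDist_le_infDist_of_forall_exists_dist_le {α : Type*} [PseudoMetricSpace α]
    {a : α} {s t : Set α} (ht : t.Nonempty) (h : ∀ y ∈ t, ∃ x ∈ s, dist a x ≤ dist a y) :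
    infDist a s ≤ infDist a t :=
  (le_infDist ht).2 fun _ hy =>
    let ⟨_, hx, hxy⟩ := h _ hy
    (infDist_le_dist_of_mem hx).trans hxy

section NormedSpace

variable {E : Type*} [NormedAddCommGroup E] [NormedSpace ℝ E]

theorem norm_sub_smul_le_norm_add {x u : E} (hu : ‖u‖ = 1) {z : ℝ} (hz : 0 ≤ z) :
    ‖x - z • u‖ ≤ ‖x‖ + z := by
  simpa [norm_smul, hu, abs_of_nonneg hz] using norm_sub_le x (z • u)

theorem norm_sub_smul_neg_normalize {x : E} (hx : x ≠ 0) {z : ℝ} (hz : 0 ≤ z) :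
    ‖x - z • -(‖x‖⁻¹ • x)‖ = ‖x‖ + z := by
  have hx' : 0 < ‖x‖ := norm_pos_iff.2 hx
  have hscale : x - z • -(‖x‖⁻¹ • x) = (1 + z * ‖x‖⁻¹) • x := by
    rw [smul_neg, sub_neg_eq_add, smul_smul, add_smul, one_smul]
  rw [hscale, norm_smul, Real.norm_of_nonneg (by positivity), add_mul, one_mul,
    inv_mul_cancel_right₀ hx'.ne']

theorem norm_sub_smul_le_norm_sub_smul_neg_normalize {x u : E} (hx : x ≠ 0) (hu : ‖u‖ = 1)
    {z : ℝ} (hz : 0 ≤ z) : ‖x - z • u‖ ≤ ‖x - z • -(‖x‖⁻¹ • x)‖ :=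
  (norm_sub_smul_le_norm_add hu hz).trans_eq (norm_sub_smul_neg_normalize hx hz).symm

end NormedSpace

theorem WithLp.prod_dist_toLp_le_of_dist_snd_le {α β : Type*} [SeminormedAddCommGroup α]
    [SeminormedAddCommGroup β] (a x : α) {b y y' : β} (h : dist b y ≤ dist b y') :
    dist (WithLp.toLp 2 (a, b)) (WithLp.toLp 2 (x, y)) ≤
      dist (WithLp.toLp 2 (a, b)) (WithLp.toLp 2 (x, y')) := by
  rw [WithLp.prod_dist_eq_of_L2, WithLp.prod_dist_eq_of_L2]
  exact Real.sqrt_le_sqrt (add_le_add_right (pow_le_pow_left₀ dist_nonneg h 2) _)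

theorem Nsphere_nonempty (p q : ℕ) (C : ℝ) (u : EuclideanSpace ℝ (Fin q)) :
    (Nsphere p q C u).Nonempty :=
  ⟨_, 0, 0, le_rfl, by simp, rfl⟩

theorem stmt_13_general (p q : ℕ) (C : ℝ)
    (ξ₁ : EuclideanSpace ℝ (Fin p)) (ξ₂ : EuclideanSpace ℝ (Fin q)) (hξ₂ : ξ₂ ≠ 0)
    (u : EuclideanSpace ℝ (Fin q)) (hu : ‖u‖ = 1) :
    Metric.infDist
        ((WithLp.equiv 2 (EuclideanSpace ℝ (Fin p) × EuclideanSpace ℝ (Fin q))).symm (ξ₁, ξ₂))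
        (Nsphere p q C u) ≤
      Metric.infDist
        ((WithLp.equiv 2 (EuclideanSpace ℝ (Fin p) × EuclideanSpace ℝ (Fin q))).symm (ξ₁, ξ₂))
        (Nsphere p q C (-(‖ξ₂‖⁻¹ • ξ₂))) := by
  refine infDist_le_infDist_of_forall_exists_dist_le (Nsphere_nonempty p q C _) ?_
  rintro _ ⟨x₁, z, hz, hsphere, rfl⟩
  refine ⟨_, ⟨x₁, z, hz, hsphere, rfl⟩, WithLp.prod_dist_toLp_le_of_dist_snd_le ξ₁ x₁ ?_⟩
  simpa only [dist_eq_norm] using norm_sub_smul_le_norm_sub_smul_neg_normalize hξ₂ hu hz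

/-- Among the bounding spheres `N_u` (over unit vectors `u ∈ ℝ^q`), the distance from
`ξ = (ξ₁, ξ₂)` with `ξ₂ ≠ 0` is maximized at `ũ = −ξ₂/‖ξ₂‖`. -/
theorem stmt_13 (p q : ℕ) (hp : 1 ≤ p) (hq : 1 ≤ q) (C : ℝ) (hC : 0 < C)
    (ξ₁ : EuclideanSpace ℝ (Fin p)) (ξ₂ : EuclideanSpace ℝ (Fin q)) (hξ₂ : ξ₂ ≠ 0)
    (u : EuclideanSpace ℝ (Fin q)) (hu : ‖u‖ = 1) :
    Metric.infDist
        ((WithLp.equiv 2 (EuclideanSpace ℝ (Fin p) × EuclideanSpace ℝ (Fin q))).symm (ξ₁, ξ₂))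
        (Nsphere p q C u) ≤
      Metric.infDist
        ((WithLp.equiv 2 (EuclideanSpace ℝ (Fin p) × EuclideanSpace ℝ (Fin q))).symm (ξ₁, ξ₂))
        (Nsphere p q C (-(‖ξ₂‖⁻¹ • ξ₂))) :=
  stmt_13_general p q C ξ₁ ξ₂ hξ₂ u hu
end
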